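/- Let $\Phi(k,s) = W_k W_{k-1}\cdots W_s$ be products of doubly stochastic matrices, and suppose there exist $\theta > 0$ and $\beta \in (0,1)$ with $|[\Phi(k,s)]_{ij} - 1/N| \le \theta\beta^{k-s}$ for all $k \ge s \ge 0$ and all $i,j$. Suppose $v_{i,k+1} = \sum_j [W_k]_{ij}v_{j,k} + \phi_i(x_{i,k+1}) - \phi_i(x_{i,k})$ with $v_{i,0} = \phi_i(x_{i,0})$, and $\|\phi_j(x_{j,s}) - \phi_j(x_{j,s-1})\| \le l_3\rho\gamma_{s-1}$ for all $j$ and $s\ge 1$. Let $\delta(x_k) = \frac{1}{N}\sum_{j=1}^N \phi_j(x_{j,k})$ and $\hat v_{i,k+1} = \sum_j [W_k]_{ij} v_{j,k}$. Then for each $i$ and $k$: $\|\delta(x_k) - \hat v_{i,k+1}\| \le \theta\beta^k \sum_{j=1}^N\|v_{j,0}\| + \theta N \rho l_3 \sum_{s=1}^{k}\beta^{k-s}\gamma_{s-1}$. -/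
import Mathlib


open Finset

theorem stmt_9 {N d : ℕ} (hN : 0 < N)
    (n : Fin N → ℕ)
    (W : ℕ → Matrix (Fin N) (Fin N) ℝ)
    (hWnonneg : ∀ k i j, 0 ≤ W k i j)
    (hWrow : ∀ k i, ∑ j, W k i j = 1)
    (hWcol : ∀ k j, ∑ i, W k i j = 1)
    (Φ : ℕ → ℕ → Matrix (Fin N) (Fin N) ℝ)
    (hΦ0 : ∀ s, Φ s s = W s)
    (hΦrec : ∀ k s, s ≤ k → Φ (k + 1) s = W (k + 1) * Φ k s)
    (θ β : ℝ) (hθ : 0 < θ) (hβ0 : 0 < β) (hβ1 : β < 1)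
    (hΦbd : ∀ k s, s ≤ k → ∀ i j, |Φ k s i j - 1 / (N : ℝ)| ≤ θ * β ^ (k - s))
    (φ : ∀ i : Fin N, EuclideanSpace ℝ (Fin (n i)) → EuclideanSpace ℝ (Fin d))
    (x : ℕ → ∀ i : Fin N, EuclideanSpace ℝ (Fin (n i)))
    (v : ℕ → Fin N → EuclideanSpace ℝ (Fin d))
    (hinit : ∀ i, v 0 i = φ i (x 0 i))
    (hupd : ∀ k i, v (k + 1) i =
      (∑ j, W k i j • v k j) + φ i (x (k + 1) i) - φ i (x k i))
    (γ : ℕ → ℝ) (hγ : ∀ k, 0 ≤ γ k) (l3 ρ : ℝ) (hl3 : 0 < l3) (hρ : 0 < ρ)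
    (hφstep : ∀ j : Fin N, ∀ s : ℕ, 1 ≤ s →
      ‖φ j (x s j) - φ j (x (s - 1) j)‖ ≤ l3 * ρ * γ (s - 1)) :
    ∀ (i : Fin N) (k : ℕ),
      ‖(1 / (N : ℝ)) • (∑ j, φ j (x k j)) - ∑ j, W k i j • v k j‖ ≤
        θ * β ^ k * ∑ j, ‖v 0 j‖ +
          θ * N * ρ * l3 * ∑ s ∈ Finset.Icc 1 k, β ^ (k - s) * γ (s - 1) := by
  intro i k
  set D : ℕ → Fin N → EuclideanSpace ℝ (Fin d) :=
    fun s j => φ j (x (s + 1) j) - φ j (x s j) with hD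
  have hDbd : ∀ s j, ‖D s j‖ ≤ l3 * ρ * γ s := by
    intro s j
    have := hφstep j (s + 1) (by omega)
    simpa using this
  -- the representation of ∑ j, W k i j • v k j via Φ
  have key : ∀ k (i : Fin N), ∑ j, W k i j • v k j =
      (∑ j, Φ k 0 i j • v 0 j) +
        ∑ s ∈ Finset.range k, ∑ j, Φ k (s + 1) i j • D s j := by
    intro k
    induction k with
    | zero => intro i; simp [hΦ0]
    | succ k ih =>
      intro i
      have hv : ∀ j : Fin N, v (k + 1) j = (∑ m, W k j m • v k m) + D k j := by
        intro j
        rw [hupd, add_sub_assoc]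
      calc ∑ j, W (k + 1) i j • v (k + 1) j
          = ∑ j, (W (k + 1) i j • (∑ m, W k j m • v k m)
              + W (k + 1) i j • D k j) := by
            refine Finset.sum_congr rfl fun j _ => ?_
            rw [hv j, smul_add]
        _ = (∑ j, W (k + 1) i j • (∑ m, W k j m • v k m))
              + ∑ j, W (k + 1) i j • D k j := Finset.sum_add_distrib
        _ = (∑ j, W (k + 1) i j • ((∑ m, Φ k 0 j m • v 0 m)
              + ∑ s ∈ Finset.range k, ∑ m, Φ k (s + 1) j m • D s m))
              + ∑ j, Φ (k + 1) (k + 1) i j • D k j := by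
            rw [hΦ0]
            refine congrArg₂ _ (Finset.sum_congr rfl fun j _ => ?_) rfl
            rw [ih j]
        _ = ((∑ j, W (k + 1) i j • ∑ m, Φ k 0 j m • v 0 m)
              + ∑ j, W (k + 1) i j •
                  ∑ s ∈ Finset.range k, ∑ m, Φ k (s + 1) j m • D s m)
              + ∑ j, Φ (k + 1) (k + 1) i j • D k j := by
            simp only [smul_add]
            rw [Finset.sum_add_distrib]
        _ = ((∑ m, Φ (k + 1) 0 i m • v 0 m)
              + ∑ s ∈ Finset.range k, ∑ m, Φ (k + 1) (s + 1) i m • D s m)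
              + ∑ j, Φ (k + 1) (k + 1) i j • D k j := by
            have hmul : ∀ s, s ≤ k → ∀ (u : Fin N → EuclideanSpace ℝ (Fin d)),
                (∑ j, W (k + 1) i j • ∑ m, Φ k s j m • u m)
                  = ∑ m, Φ (k + 1) s i m • u m := by
              intro s hs u
              rw [hΦrec k s hs]
              simp only [Finset.smul_sum, smul_smul]
              rw [Finset.sum_comm]
              refine Finset.sum_congr rfl fun m _ => ?_
              rw [Matrix.mul_apply, Finset.sum_smul]
            rw [hmul 0 (Nat.zero_le _)]
            have swap : (∑ j, W (k + 1) i j •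
                ∑ s ∈ Finset.range k, ∑ m, Φ k (s + 1) j m • D s m)
                = ∑ s ∈ Finset.range k, ∑ j, W (k + 1) i j •
                    ∑ m, Φ k (s + 1) j m • D s m := by
              simp only [Finset.smul_sum]
              exact Finset.sum_comm
            rw [swap]
            congr 1
            congr 1
            exact Finset.sum_congr rfl fun s hs =>
              hmul (s + 1) (Finset.mem_range.mp hs) (D s)
        _ = (∑ j, Φ (k + 1) 0 i j • v 0 j)
              + ∑ s ∈ Finset.range (k + 1), ∑ j, Φ (k + 1) (s + 1) i j • D s j := by
            rw [Finset.sum_range_succ, add_assoc]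
  -- telescoping of φ
  have tele : ∀ j : Fin N, φ j (x k j) = v 0 j + ∑ s ∈ Finset.range k, D s j := by
    intro j
    rw [hinit]
    have h := Finset.sum_range_sub (fun s => φ j (x s j)) k
    simp only [hD]
    rw [h]
    abel
  have sub_lem : ∀ (c : Fin N → ℝ) (u : Fin N → EuclideanSpace ℝ (Fin d)),
      ∑ j, ((1 : ℝ) / N - c j) • u j
        = (1 / (N : ℝ)) • ∑ j, u j - ∑ j, c j • u j := by
    intro c u
    simp [sub_smul, Finset.sum_sub_distrib, Finset.smul_sum]
  have rep : (1 / (N : ℝ)) • (∑ j, φ j (x k j)) - ∑ j, W k i j • v k j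
      = (∑ j, ((1 : ℝ) / N - Φ k 0 i j) • v 0 j)
        + ∑ s ∈ Finset.range k, ∑ j, ((1 : ℝ) / N - Φ k (s + 1) i j) • D s j := by
    rw [key k i]
    have hφsum : (∑ j, φ j (x k j))
        = (∑ j, v 0 j) + ∑ s ∈ Finset.range k, ∑ j, D s j := by
      calc (∑ j, φ j (x k j))
          = ∑ j, (v 0 j + ∑ s ∈ Finset.range k, D s j) :=
            Finset.sum_congr rfl fun j _ => tele j
        _ = (∑ j, v 0 j) + ∑ j, ∑ s ∈ Finset.range k, D s j :=
            Finset.sum_add_distrib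
        _ = (∑ j, v 0 j) + ∑ s ∈ Finset.range k, ∑ j, D s j := by
            rw [Finset.sum_comm]
    rw [hφsum, sub_lem, Finset.sum_congr rfl fun s (_ : s ∈ Finset.range k) =>
      sub_lem (fun j => Φ k (s + 1) i j) (D s)]
    rw [Finset.sum_sub_distrib, ← Finset.smul_sum, smul_add, add_sub_add_comm]
  rw [rep]
  have hb1 : ‖∑ j, ((1 : ℝ) / N - Φ k 0 i j) • v 0 j‖
      ≤ θ * β ^ k * ∑ j, ‖v 0 j‖ := by
    calc ‖∑ j, ((1 : ℝ) / N - Φ k 0 i j) • v 0 j‖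
        ≤ ∑ j, ‖((1 : ℝ) / N - Φ k 0 i j) • v 0 j‖ := norm_sum_le _ _
      _ ≤ ∑ j, θ * β ^ k * ‖v 0 j‖ := by
          refine Finset.sum_le_sum fun j _ => ?_
          rw [norm_smul, Real.norm_eq_abs]
          have h1 : |(1 : ℝ) / N - Φ k 0 i j| ≤ θ * β ^ k := by
            rw [abs_sub_comm]
            simpa using hΦbd k 0 (Nat.zero_le k) i j
          exact mul_le_mul_of_nonneg_right h1 (norm_nonneg _)
      _ = θ * β ^ k * ∑ j, ‖v 0 j‖ := by rw [Finset.mul_sum]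
  have hreindex : (∑ s ∈ Finset.Icc 1 k, β ^ (k - s) * γ (s - 1))
      = ∑ s ∈ Finset.range k, β ^ (k - (s + 1)) * γ s := by
    refine Finset.sum_nbij' (fun s => s - 1) (fun s => s + 1) ?_ ?_ ?_ ?_ ?_
    · intro a ha; simp only [Finset.mem_Icc] at ha; simp only [Finset.mem_range]; omega
    · intro a ha; simp only [Finset.mem_range] at ha; simp only [Finset.mem_Icc]; omega
    · intro a ha; show a - 1 + 1 = a; simp only [Finset.mem_Icc] at ha; omega
    · intro a _; show a + 1 - 1 = a; omega
    · intro a ha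
      simp only [Finset.mem_Icc] at ha
      have h1 : a - 1 + 1 = a := by omega
      rw [h1]
  have hb2 : ‖∑ s ∈ Finset.range k, ∑ j, ((1 : ℝ) / N - Φ k (s + 1) i j) • D s j‖
      ≤ θ * N * ρ * l3 * ∑ s ∈ Finset.Icc 1 k, β ^ (k - s) * γ (s - 1) := by
    rw [hreindex]
    calc ‖∑ s ∈ Finset.range k, ∑ j, ((1 : ℝ) / N - Φ k (s + 1) i j) • D s j‖
        ≤ ∑ s ∈ Finset.range k, ‖∑ j, ((1 : ℝ) / N - Φ k (s + 1) i j) • D s j‖ :=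
          norm_sum_le _ _
      _ ≤ ∑ s ∈ Finset.range k,
            (θ * N * ρ * l3) * (β ^ (k - (s + 1)) * γ s) := by
          refine Finset.sum_le_sum fun s hs => ?_
          have hsk : s + 1 ≤ k := Finset.mem_range.mp hs
          calc ‖∑ j, ((1 : ℝ) / N - Φ k (s + 1) i j) • D s j‖
              ≤ ∑ j, ‖((1 : ℝ) / N - Φ k (s + 1) i j) • D s j‖ := norm_sum_le _ _
            _ ≤ ∑ j : Fin N, (θ * β ^ (k - (s + 1))) * (l3 * ρ * γ s) := by
                refine Finset.sum_le_sum fun j _ => ?_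
                rw [norm_smul, Real.norm_eq_abs]
                have h1 : |(1 : ℝ) / N - Φ k (s + 1) i j| ≤ θ * β ^ (k - (s + 1)) := by
                  rw [abs_sub_comm]
                  simpa using hΦbd k (s + 1) hsk i j
                exact mul_le_mul h1 (hDbd s j) (norm_nonneg _)
                  (by positivity)
            _ = (θ * N * ρ * l3) * (β ^ (k - (s + 1)) * γ s) := by
                rw [Finset.sum_const, Finset.card_univ, Fintype.card_fin]
                push_cast
                ring
      _ = (θ * N * ρ * l3) * ∑ s ∈ Finset.range k, β ^ (k - (s + 1)) * γ s := by
          rw [Finset.mul_sum]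
  calc ‖(∑ j, ((1 : ℝ) / N - Φ k 0 i j) • v 0 j)
        + ∑ s ∈ Finset.range k, ∑ j, ((1 : ℝ) / N - Φ k (s + 1) i j) • D s j‖
      ≤ ‖∑ j, ((1 : ℝ) / N - Φ k 0 i j) • v 0 j‖
        + ‖∑ s ∈ Finset.range k, ∑ j, ((1 : ℝ) / N - Φ k (s + 1) i j) • D s j‖ :=
        norm_add_le _ _
    _ ≤ _ := add_le_add hb1 hb2
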